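/- Let γ ∈ (0,1], ν > 0, K ∈ S_γ(ν), d > 0, and let x₀ ∈ ℝⁿ satisfy ‖x₀‖ ≤ d. Define x_t = (√γ(A − BKC))^t x₀ for t ∈ ℕ. Then for every truncation horizon τ ∈ ℕ, the tail of the discounted cost satisfies Σ_{t=τ}^∞ x_tᵀ(Q + CᵀKᵀRKC)x_t = x_τᵀ P_K(γ) x_τ ≤ (1 − ℓ₀/ν)^τ · ν² d²/ℓ₀. -/

import Mathlib

/-!
Put `L = √γ (A − BKC)` and `M = Q + CᵀKᵀRKC`, so that `P_K(γ) = ∑ₜ (Lᵗ)ᵀ M Lᵗ`. Since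
`ρ(L) < 1`, Gelfand's formula makes `‖Lᵗ‖` decay geometrically, so the series converges and
satisfies the Lyapunov equation `P = M + Lᵀ P L`; evaluating it at `x_τ` gives the tail identity.
For the bound, `V(x) = xᵀ P x` is a Lyapunov function: `V(x) ≤ tr P ‖x‖² ≤ ν ‖x‖²` and
`xᵀ M x ≥ ℓ₀ ‖x‖²`, hence `V(L x) = V(x) − xᵀ M x ≤ (1 − ℓ₀/ν) V(x)`. Iterating from
`V(x₀) ≤ ν d²`, and using `ℓ₀ ≤ tr M ≤ tr P ≤ ν`, gives the claim.
-/

open Matrix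

noncomputable section

/-- Spectral radius of a real square matrix: the largest modulus of a complex eigenvalue. -/
def specRad {n : ℕ} (M : Matrix (Fin n) (Fin n) ℝ) : ℝ :=
  sSup {r : ℝ | ∃ μ ∈ spectrum ℂ (M.map (algebraMap ℝ ℂ)), r = ‖μ‖}

/-- Spectral (ℓ²→ℓ² operator) norm of a real matrix. -/
def spNorm {a b : ℕ} (M : Matrix (Fin a) (Fin b) ℝ) : ℝ :=
  ‖LinearMap.toContinuousLinearMap (Matrix.toEuclideanLin M)‖

/-- Frobenius norm of a real matrix. -/
def frobNorm {a b : ℕ} (M : Matrix (Fin a) (Fin b) ℝ) : ℝ :=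
  Real.sqrt (∑ i, ∑ j, (M i j) ^ 2)

/-- Euclidean norm of a vector. -/
def vecNorm {a : ℕ} (x : Fin a → ℝ) : ℝ :=
  Real.sqrt (∑ i, (x i) ^ 2)

variable {n m p : ℕ}

/-- Closed-loop matrix `A - BKC`. -/
def Acl (A : Matrix (Fin n) (Fin n) ℝ) (B : Matrix (Fin n) (Fin m) ℝ)
    (C : Matrix (Fin p) (Fin n) ℝ) (K : Matrix (Fin m) (Fin p) ℝ) : Matrix (Fin n) (Fin n) ℝ :=
  A - B * K * C

/-- Membership in the stabilizing set `S_γ`: `√γ · ρ(A − BKC) < 1`. -/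
def inS (A : Matrix (Fin n) (Fin n) ℝ) (B : Matrix (Fin n) (Fin m) ℝ)
    (C : Matrix (Fin p) (Fin n) ℝ) (γ : ℝ) (K : Matrix (Fin m) (Fin p) ℝ) : Prop :=
  Real.sqrt γ * specRad (Acl A B C K) < 1

/-- The solution `P_K(γ) = Σ_{t} γ^t ((A−BKC)ᵀ)^t (Q + CᵀKᵀRKC) (A−BKC)^t` of the
discounted Lyapunov equation. -/
def Pmat (A : Matrix (Fin n) (Fin n) ℝ) (B : Matrix (Fin n) (Fin m) ℝ)
    (C : Matrix (Fin p) (Fin n) ℝ) (Q : Matrix (Fin n) (Fin n) ℝ) (R : Matrix (Fin m) (Fin m) ℝ)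
    (γ : ℝ) (K : Matrix (Fin m) (Fin p) ℝ) : Matrix (Fin n) (Fin n) ℝ :=
  ∑' t : ℕ, γ ^ t • ((Acl A B C K)ᵀ ^ t * (Q + Cᵀ * Kᵀ * R * K * C) * (Acl A B C K) ^ t)

/-- The Gramian `Σ_K(γ) = Σ_{t} γ^t (A−BKC)^t ((A−BKC)ᵀ)^t`. -/
def Smat (A : Matrix (Fin n) (Fin n) ℝ) (B : Matrix (Fin n) (Fin m) ℝ)
    (C : Matrix (Fin p) (Fin n) ℝ) (γ : ℝ) (K : Matrix (Fin m) (Fin p) ℝ) :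
    Matrix (Fin n) (Fin n) ℝ :=
  ∑' t : ℕ, γ ^ t • ((Acl A B C K) ^ t * ((Acl A B C K)ᵀ) ^ t)

/-- The discounted cost `J_γ(K) = Tr(P_K(γ))`. -/
def Jcost (A : Matrix (Fin n) (Fin n) ℝ) (B : Matrix (Fin n) (Fin m) ℝ)
    (C : Matrix (Fin p) (Fin n) ℝ) (Q : Matrix (Fin n) (Fin n) ℝ) (R : Matrix (Fin m) (Fin m) ℝ)
    (γ : ℝ) (K : Matrix (Fin m) (Fin p) ℝ) : ℝ :=
  (Pmat A B C Q R γ K).trace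

/-- `E_K = (R + γBᵀP_K(γ)B)KC − γBᵀP_K(γ)A`. -/
def Egrad (A : Matrix (Fin n) (Fin n) ℝ) (B : Matrix (Fin n) (Fin m) ℝ)
    (C : Matrix (Fin p) (Fin n) ℝ) (Q : Matrix (Fin n) (Fin n) ℝ) (R : Matrix (Fin m) (Fin m) ℝ)
    (γ : ℝ) (K : Matrix (Fin m) (Fin p) ℝ) : Matrix (Fin m) (Fin n) ℝ :=
  (R + γ • (Bᵀ * Pmat A B C Q R γ K * B)) * K * C - γ • (Bᵀ * Pmat A B C Q R γ K * A)

/-- The closed-form gradient `∇J_γ(K) = 2 E_K Σ_K(γ) Cᵀ`. -/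
def gradJ (A : Matrix (Fin n) (Fin n) ℝ) (B : Matrix (Fin n) (Fin m) ℝ)
    (C : Matrix (Fin p) (Fin n) ℝ) (Q : Matrix (Fin n) (Fin n) ℝ) (R : Matrix (Fin m) (Fin m) ℝ)
    (γ : ℝ) (K : Matrix (Fin m) (Fin p) ℝ) : Matrix (Fin m) (Fin p) ℝ :=
  (2 : ℝ) • (Egrad A B C Q R γ K * Smat A B C γ K * Cᵀ)

end

namespace Matrix

lemma PosSemidef.of_sub_smul_one {ι : Type*} [DecidableEq ι] {M : Matrix ι ι ℝ} {ℓ : ℝ}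
    (hM : (M - ℓ • 1).PosSemidef) (hℓ : 0 ≤ ℓ) : M.PosSemidef := by
  simpa using hM.add (PosSemidef.one.smul hℓ)

section QuadraticForms

variable {ι : Type*} [Fintype ι]

lemma dotProduct_self_nonneg (x : ι → ℝ) : 0 ≤ x ⬝ᵥ x :=
  Finset.sum_nonneg fun i _ => mul_self_nonneg (x i)

lemma sq_dotProduct_le (x y : ι → ℝ) : (x ⬝ᵥ y) ^ 2 ≤ (x ⬝ᵥ x) * (y ⬝ᵥ y) := by
  simpa only [dotProduct, sq] using Finset.sum_mul_sq_le_sq_mul_sq Finset.univ x y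

lemma PosSemidef.dotProduct_mulVec_le_trace_mul {P : Matrix ι ι ℝ} (hP : P.PosSemidef)
    (x : ι → ℝ) : x ⬝ᵥ (P *ᵥ x) ≤ P.trace * (x ⬝ᵥ x) := by
  obtain ⟨r, v, rfl⟩ := posSemidef_iff_eq_sum_vecMulVec.mp hP
  simp only [star_trivial, sum_mulVec, dotProduct_sum, trace_sum, vecMulVec_mulVec,
    dotProduct_smul, MulOpposite.smul_eq_mul_unop, MulOpposite.unop_op, trace_vecMulVec,
    Finset.sum_mul]
  refine Finset.sum_le_sum fun i _ => ?_
  rw [dotProduct_comm (v i) x, ← sq, mul_comm (v i ⬝ᵥ v i)]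
  exact sq_dotProduct_le x (v i)

lemma dotProduct_transpose_mul_mul_mulVec (N W : Matrix ι ι ℝ) (x : ι → ℝ) :
    x ⬝ᵥ ((Wᵀ * N * W) *ᵥ x) = (W *ᵥ x) ⬝ᵥ (N *ᵥ (W *ᵥ x)) := by
  rw [← mulVec_mulVec, ← mulVec_mulVec, dotProduct_mulVec x, vecMul_transpose]

variable [DecidableEq ι]

lemma mul_dotProduct_self_le_dotProduct_mulVec {M : Matrix ι ι ℝ} {ℓ : ℝ}
    (hM : (M - ℓ • 1).PosSemidef) (x : ι → ℝ) : ℓ * (x ⬝ᵥ x) ≤ x ⬝ᵥ (M *ᵥ x) := by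
  have := hM.dotProduct_mulVec_nonneg x
  simp only [star_trivial, sub_mulVec, smul_mulVec, one_mulVec, dotProduct_sub,
    dotProduct_smul, smul_eq_mul] at this
  linarith

lemma posSemidef_add_transpose_mul_mul_sub_smul_one {κ μ : Type*} [Fintype κ] [Fintype μ]
    [DecidableEq μ] {Q : Matrix ι ι ℝ} {R : Matrix μ μ ℝ} {ℓ : ℝ}
    (hQ : (Q - ℓ • 1).PosSemidef) (hR : (R - ℓ • 1).PosSemidef) (hℓ : 0 ≤ ℓ)
    (C : Matrix κ ι ℝ) (K : Matrix μ κ ℝ) : (Q + Cᵀ * Kᵀ * R * K * C - ℓ • 1).PosSemidef := by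
  have hconj := (hR.of_sub_smul_one hℓ).conjTranspose_mul_mul_same (K * C)
  rw [conjTranspose_eq_transpose_of_trivial, transpose_mul] at hconj
  convert hQ.add hconj using 1
  simp only [Matrix.mul_assoc]
  abel

end QuadraticForms

section LyapunovSum

variable {ι : Type*} [Fintype ι] [DecidableEq ι]

/-- Solves the discrete Lyapunov equation `X = M + Lᵀ X L` when the series converges; it is the
junk value `0` otherwise. -/
noncomputable def lyapunovSum (L M : Matrix ι ι ℝ) : Matrix ι ι ℝ :=
  ∑' t : ℕ, (L ^ t)ᵀ * M * L ^ t

variable {L M : Matrix ι ι ℝ}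

lemma lyapunovSum_eq_add (hs : Summable fun t : ℕ => (L ^ t)ᵀ * M * L ^ t) :
    lyapunovSum L M = M + Lᵀ * lyapunovSum L M * L := by
  have hstep : ∀ t : ℕ,
      (L ^ (t + 1))ᵀ * M * L ^ (t + 1) = Lᵀ * ((L ^ t)ᵀ * M * L ^ t) * L := fun t => by
    simp only [pow_succ, transpose_mul, Matrix.mul_assoc]
  conv_lhs => rw [lyapunovSum, hs.tsum_eq_zero_add, tsum_congr hstep,
    (hs.mul_left Lᵀ).tsum_mul_right, hs.tsum_mul_left]
  simp [lyapunovSum]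

lemma dotProduct_lyapunovSum_mulVec (hs : Summable fun t : ℕ => (L ^ t)ᵀ * M * L ^ t)
    (x : ι → ℝ) :
    x ⬝ᵥ (lyapunovSum L M *ᵥ x) = ∑' t : ℕ, (L ^ t *ᵥ x) ⬝ᵥ (M *ᵥ (L ^ t *ᵥ x)) := by
  let φ : Matrix ι ι ℝ →+ ℝ :=
    { toFun := fun N => x ⬝ᵥ (N *ᵥ x)
      map_zero' := by simp
      map_add' := fun N N' => by simp [add_mulVec, dotProduct_add] }
  have hφ : Continuous φ :=
    continuous_const.dotProduct (continuous_id.matrix_mulVec continuous_const)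
  simp_rw [← dotProduct_transpose_mul_mul_mulVec]
  exact hs.map_tsum φ hφ

lemma PosSemidef.lyapunovSum (hs : Summable fun t : ℕ => (L ^ t)ᵀ * M * L ^ t)
    (hM : M.PosSemidef) : (lyapunovSum L M).PosSemidef := by
  have hterm : ∀ t : ℕ, ((L ^ t)ᵀ * M * L ^ t).PosSemidef := fun t => by
    simpa only [conjTranspose_eq_transpose_of_trivial] using hM.conjTranspose_mul_mul_same (L ^ t)
  refine .of_dotProduct_mulVec_nonneg ?_ fun x => ?_
  · rw [IsHermitian, Matrix.lyapunovSum, conjTranspose_tsum]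
    exact tsum_congr fun t => (hterm t).isHermitian
  · rw [star_trivial, dotProduct_lyapunovSum_mulVec hs]
    exact tsum_nonneg fun t => hM.dotProduct_mulVec_nonneg (L ^ t *ᵥ x)

variable {ℓ ν : ℝ}

lemma le_trace_lyapunovSum [Nonempty ι] (hs : Summable fun t : ℕ => (L ^ t)ᵀ * M * L ^ t)
    (hM : (M - ℓ • 1).PosSemidef) (hℓ : 0 ≤ ℓ) : ℓ ≤ (lyapunovSum L M).trace := by
  have htail := (((hM.of_sub_smul_one hℓ).lyapunovSum hs).conjTranspose_mul_mul_same L).trace_nonneg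
  rw [conjTranspose_eq_transpose_of_trivial] at htail
  have hMtr := hM.trace_nonneg
  rw [trace_sub, trace_smul, trace_one, smul_eq_mul] at hMtr
  have hcard : (1 : ℝ) ≤ Fintype.card ι := by exact_mod_cast Fintype.card_pos
  rw [lyapunovSum_eq_add hs, trace_add]
  nlinarith

lemma dotProduct_lyapunovSum_mulVec_le (hs : Summable fun t : ℕ => (L ^ t)ᵀ * M * L ^ t)
    (hM : (M - ℓ • 1).PosSemidef) (hℓ : 0 ≤ ℓ) (htr : (lyapunovSum L M).trace ≤ ν)
    (x : ι → ℝ) : x ⬝ᵥ (lyapunovSum L M *ᵥ x) ≤ ν * (x ⬝ᵥ x) :=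
  (((hM.of_sub_smul_one hℓ).lyapunovSum hs).dotProduct_mulVec_le_trace_mul x).trans
    (mul_le_mul_of_nonneg_right htr (dotProduct_self_nonneg x))

lemma dotProduct_lyapunovSum_mulVec_mulVec_le
    (hs : Summable fun t : ℕ => (L ^ t)ᵀ * M * L ^ t) (hM : (M - ℓ • 1).PosSemidef)
    (hℓ : 0 ≤ ℓ) (hν : 0 < ν) (htr : (lyapunovSum L M).trace ≤ ν) (x : ι → ℝ) :
    (L *ᵥ x) ⬝ᵥ (lyapunovSum L M *ᵥ (L *ᵥ x)) ≤
      (1 - ℓ / ν) * (x ⬝ᵥ (lyapunovSum L M *ᵥ x)) := by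
  set G := lyapunovSum L M with hG
  have hsplit : x ⬝ᵥ (G *ᵥ x) = x ⬝ᵥ (M *ᵥ x) + (L *ᵥ x) ⬝ᵥ (G *ᵥ (L *ᵥ x)) := by
    conv_lhs => rw [hG, lyapunovSum_eq_add hs]
    rw [add_mulVec, dotProduct_add, dotProduct_transpose_mul_mul_mulVec]
  have hlow := mul_dotProduct_self_le_dotProduct_mulVec hM x
  have hup : x ⬝ᵥ (G *ᵥ x) ≤ ν * (x ⬝ᵥ x) := dotProduct_lyapunovSum_mulVec_le hs hM hℓ htr x
  have hscaled : ℓ / ν * (x ⬝ᵥ (G *ᵥ x)) ≤ ℓ * (x ⬝ᵥ x) :=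
    calc ℓ / ν * (x ⬝ᵥ (G *ᵥ x)) ≤ ℓ / ν * (ν * (x ⬝ᵥ x)) := by gcongr
      _ = ℓ * (x ⬝ᵥ x) := by field_simp
  linarith

lemma dotProduct_lyapunovSum_mulVec_pow_le
    (hs : Summable fun t : ℕ => (L ^ t)ᵀ * M * L ^ t) (hM : (M - ℓ • 1).PosSemidef)
    (hℓ : 0 ≤ ℓ) (hν : 0 < ν) (hℓν : ℓ ≤ ν) (htr : (lyapunovSum L M).trace ≤ ν)
    (x : ι → ℝ) (τ : ℕ) :
    (L ^ τ *ᵥ x) ⬝ᵥ (lyapunovSum L M *ᵥ (L ^ τ *ᵥ x)) ≤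
      (1 - ℓ / ν) ^ τ * (x ⬝ᵥ (lyapunovSum L M *ᵥ x)) := by
  have hc : 0 ≤ 1 - ℓ / ν := sub_nonneg.2 ((div_le_one hν).2 hℓν)
  simpa using le_geom (u := fun t => (L ^ t *ᵥ x) ⬝ᵥ (lyapunovSum L M *ᵥ (L ^ t *ᵥ x))) hc τ
    fun t _ => by
      simpa only [pow_succ', ← mulVec_mulVec] using
        dotProduct_lyapunovSum_mulVec_mulVec_le hs hM hℓ hν htr (L ^ t *ᵥ x)

end LyapunovSum

end Matrix

section SpectralRadius

open Filter
-- The Frobenius norm is submultiplicative and transpose-invariant, and it is a Banach-algebra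
-- norm on complex matrices, so Gelfand's formula applies to it.
open scoped Matrix.Norms.Frobenius

variable {k : ℕ}

lemma specRad_nonneg (L : Matrix (Fin k) (Fin k) ℝ) : 0 ≤ specRad L :=
  Real.sSup_nonneg fun _ ⟨_, _, h⟩ => h ▸ norm_nonneg _

lemma spectralRadius_map_le_specRad (L : Matrix (Fin k) (Fin k) ℝ) :
    spectralRadius ℂ (L.map (algebraMap ℝ ℂ)) ≤ ENNReal.ofReal (specRad L) := by
  have hbdd : BddAbove {r : ℝ | ∃ μ ∈ spectrum ℂ (L.map (algebraMap ℝ ℂ)), r = ‖μ‖} :=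
    ⟨_, fun _ ⟨_, hμ, h⟩ => h ▸ spectrum.norm_le_norm_mul_of_mem hμ⟩
  refine iSup₂_le fun μ hμ => ?_
  rw [← enorm_eq_nnnorm, ← ofReal_norm]
  exact ENNReal.ofReal_le_ofReal (le_csSup hbdd ⟨μ, hμ, rfl⟩)

lemma eventually_norm_pow_le_of_specRad_lt {L : Matrix (Fin k) (Fin k) ℝ} {r : ℝ}
    (h : specRad L < r) : ∀ᶠ t : ℕ in atTop, ‖L ^ t‖ ≤ r ^ t := by
  set Lc := L.map (algebraMap ℝ ℂ) with hLc
  have hr : 0 < r := (specRad_nonneg L).trans_lt h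
  have hlt : spectralRadius ℂ Lc < ENNReal.ofReal r :=
    (spectralRadius_map_le_specRad L).trans_lt ((ENNReal.ofReal_lt_ofReal_iff hr).2 h)
  filter_upwards [(spectrum.pow_norm_pow_one_div_tendsto_nhds_spectralRadius Lc).eventually_lt_const
    hlt, eventually_ne_atTop 0] with t ht ht0
  have hnorm : ‖L ^ t‖ = ‖Lc ^ t‖ := by
    rw [hLc, ← Matrix.map_pow]
    exact (Matrix.frobenius_norm_map_eq _ _ fun a => Complex.norm_real a).symm
  rw [ENNReal.ofReal_lt_ofReal_iff hr, one_div] at ht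
  rw [hnorm, ← Real.rpow_inv_natCast_pow (norm_nonneg _) ht0]
  gcongr

lemma summable_transpose_pow_mul_mul_pow {L : Matrix (Fin k) (Fin k) ℝ} {ρ : ℝ} (hρ0 : 0 ≤ ρ)
    (hρ1 : ρ < 1) (h : ∀ᶠ t : ℕ in atTop, ‖L ^ t‖ ≤ ρ ^ t) (M : Matrix (Fin k) (Fin k) ℝ) :
    Summable fun t : ℕ => (L ^ t)ᵀ * M * L ^ t := by
  refine .of_norm_bounded_eventually_nat
    ((summable_geometric_of_lt_one (sq_nonneg ρ) (by nlinarith : ρ ^ 2 < 1)).mul_left ‖M‖) ?_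
  filter_upwards [h] with t ht
  calc ‖(L ^ t)ᵀ * M * L ^ t‖ ≤ ‖(L ^ t)ᵀ‖ * ‖M‖ * ‖L ^ t‖ :=
        (Matrix.frobenius_norm_mul _ _).trans (by gcongr; exact Matrix.frobenius_norm_mul _ _)
    _ = ‖M‖ * ‖L ^ t‖ ^ 2 := by rw [Matrix.frobenius_norm_transpose]; ring
    _ ≤ ‖M‖ * (ρ ^ 2) ^ t := by rw [← pow_mul, mul_comm 2, pow_mul]; gcongr

lemma summable_transpose_pow_mul_mul_pow_of_mul_specRad_lt_one {A : Matrix (Fin k) (Fin k) ℝ}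
    {c : ℝ} (hc : 0 ≤ c) (h : c * specRad A < 1) (M : Matrix (Fin k) (Fin k) ℝ) :
    Summable fun t : ℕ => ((c • A) ^ t)ᵀ * M * (c • A) ^ t := by
  obtain ⟨r, hAr, hcr⟩ : ∃ r > specRad A, c * r < 1 :=
    ((continuous_const.mul continuous_id).tendsto (specRad A)).eventually (gt_mem_nhds h)
      |>.exists_gt
  refine summable_transpose_pow_mul_mul_pow (mul_nonneg hc ((specRad_nonneg A).trans hAr.le))
    hcr ?_ M
  filter_upwards [eventually_norm_pow_le_of_specRad_lt hAr] with t ht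
  rw [smul_pow, norm_smul, Real.norm_of_nonneg (pow_nonneg hc t), mul_pow]
  gcongr

end SpectralRadius

section LinearQuadraticRegulator

variable {n m p : ℕ}

lemma Pmat_eq_lyapunovSum (A : Matrix (Fin n) (Fin n) ℝ) (B : Matrix (Fin n) (Fin m) ℝ)
    (C : Matrix (Fin p) (Fin n) ℝ) (Q : Matrix (Fin n) (Fin n) ℝ) (R : Matrix (Fin m) (Fin m) ℝ)
    {γ : ℝ} (hγ : 0 ≤ γ) (K : Matrix (Fin m) (Fin p) ℝ) :
    Pmat A B C Q R γ K =
      (Real.sqrt γ • Acl A B C K).lyapunovSum (Q + Cᵀ * Kᵀ * R * K * C) := by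
  refine tsum_congr fun t => ?_
  simp only [smul_pow, transpose_smul, transpose_pow, smul_mul_assoc, mul_smul_comm, smul_smul,
    ← mul_pow, Real.mul_self_sqrt hγ]

lemma dotProduct_self_le_sq_of_vecNorm_le {x : Fin n → ℝ} {d : ℝ} (hx : vecNorm x ≤ d) :
    x ⬝ᵥ x ≤ d ^ 2 := by
  have hsq : vecNorm x ^ 2 = x ⬝ᵥ x := by
    rw [vecNorm, Real.sq_sqrt (Finset.sum_nonneg fun i _ => sq_nonneg (x i))]
    simp only [dotProduct, sq]
  exact hsq ▸ pow_le_pow_left₀ (Real.sqrt_nonneg _) hx 2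

end LinearQuadraticRegulator

theorem stmt10_general
    {n m p : ℕ} (hn : 1 ≤ n)
    (A : Matrix (Fin n) (Fin n) ℝ) (B : Matrix (Fin n) (Fin m) ℝ) (C : Matrix (Fin p) (Fin n) ℝ)
    (Q : Matrix (Fin n) (Fin n) ℝ) (R : Matrix (Fin m) (Fin m) ℝ)
    (ℓ₀ : ℝ) (hℓ₀ : 0 < ℓ₀)
    (hQlb : (Q - ℓ₀ • (1 : Matrix (Fin n) (Fin n) ℝ)).PosSemidef)
    (hRlb : (R - ℓ₀ • (1 : Matrix (Fin m) (Fin m) ℝ)).PosSemidef)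
    (γ : ℝ) (hγ : γ ∈ Set.Ioc (0 : ℝ) 1) (ν : ℝ) (hν : 0 < ν)
    (K : Matrix (Fin m) (Fin p) ℝ)
    (hK : inS A B C γ K) (hKν : Jcost A B C Q R γ K ≤ ν)
    (d : ℝ) (x₀ : Fin n → ℝ) (hx₀ : vecNorm x₀ ≤ d) :
    ∀ τ : ℕ,
      (∑' s : ℕ,
          ((Real.sqrt γ • Acl A B C K) ^ (τ + s) *ᵥ x₀) ⬝ᵥ
            ((Q + Cᵀ * Kᵀ * R * K * C) *ᵥ ((Real.sqrt γ • Acl A B C K) ^ (τ + s) *ᵥ x₀))) =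
        ((Real.sqrt γ • Acl A B C K) ^ τ *ᵥ x₀) ⬝ᵥ
          (Pmat A B C Q R γ K *ᵥ ((Real.sqrt γ • Acl A B C K) ^ τ *ᵥ x₀)) ∧
      ((Real.sqrt γ • Acl A B C K) ^ τ *ᵥ x₀) ⬝ᵥ
          (Pmat A B C Q R γ K *ᵥ ((Real.sqrt γ • Acl A B C K) ^ τ *ᵥ x₀)) ≤
        (1 - ℓ₀ / ν) ^ τ * (ν ^ 2 * d ^ 2 / ℓ₀) := by
  intro τ
  set L := Real.sqrt γ • Acl A B C K
  set M := Q + Cᵀ * Kᵀ * R * K * C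
  have : Nonempty (Fin n) := ⟨⟨0, hn⟩⟩
  have hM : (M - ℓ₀ • 1).PosSemidef :=
    posSemidef_add_transpose_mul_mul_sub_smul_one hQlb hRlb hℓ₀.le C K
  have hs : Summable fun t : ℕ => (L ^ t)ᵀ * M * L ^ t :=
    summable_transpose_pow_mul_mul_pow_of_mul_specRad_lt_one (Real.sqrt_nonneg γ) hK M
  have hP : Pmat A B C Q R γ K = L.lyapunovSum M := Pmat_eq_lyapunovSum A B C Q R hγ.1.le K
  rw [Jcost, hP] at hKν
  have hℓν : ℓ₀ ≤ ν := (le_trace_lyapunovSum hs hM hℓ₀.le).trans hKν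
  rw [hP]
  refine ⟨?_, ?_⟩
  · have hshift : ∀ s, L ^ s *ᵥ (L ^ τ *ᵥ x₀) = L ^ (τ + s) *ᵥ x₀ := fun s => by
      rw [mulVec_mulVec, ← pow_add, add_comm]
    rw [dotProduct_lyapunovSum_mulVec hs]
    simp only [hshift]
  · have hquad : x₀ ⬝ᵥ (L.lyapunovSum M *ᵥ x₀) ≤ ν * d ^ 2 :=
      (dotProduct_lyapunovSum_mulVec_le hs hM hℓ₀.le hKν x₀).trans
        (mul_le_mul_of_nonneg_left (dotProduct_self_le_sq_of_vecNorm_le hx₀) hν.le)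
    have hc : 0 ≤ 1 - ℓ₀ / ν := sub_nonneg.2 ((div_le_one hν).2 hℓν)
    calc _ ≤ (1 - ℓ₀ / ν) ^ τ * (x₀ ⬝ᵥ (L.lyapunovSum M *ᵥ x₀)) :=
          dotProduct_lyapunovSum_mulVec_pow_le hs hM hℓ₀.le hν hℓν hKν x₀ τ
      _ ≤ (1 - ℓ₀ / ν) ^ τ * (ν ^ 2 * d ^ 2 / ℓ₀) := by
          refine mul_le_mul_of_nonneg_left (hquad.trans ?_) (pow_nonneg hc τ)
          rw [le_div_iff₀ hℓ₀]
          nlinarith [mul_nonneg hν.le (sq_nonneg d)]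

/-- the tail of the discounted cost along the damped trajectory equals
`x_τᵀ P_K(γ) x_τ` and is bounded by `(1 − ℓ₀/ν)^τ · ν²d²/ℓ₀`. -/
theorem stmt10
    {n m p : ℕ} (hn : 1 ≤ n) (hm : 1 ≤ m) (hp : 1 ≤ p)
    (A : Matrix (Fin n) (Fin n) ℝ) (B : Matrix (Fin n) (Fin m) ℝ) (C : Matrix (Fin p) (Fin n) ℝ)
    (Q : Matrix (Fin n) (Fin n) ℝ) (R : Matrix (Fin m) (Fin m) ℝ)
    (hQsymm : Q.IsSymm) (hRsymm : R.IsSymm)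
    (ℓ₀ ℓ₁ ψ φ : ℝ) (hℓ₀ : 0 < ℓ₀) (hℓ₀₁ : ℓ₀ ≤ ℓ₁) (hψ : 1 ≤ ψ) (hφ : 1 ≤ φ)
    (hQlb : (Q - ℓ₀ • (1 : Matrix (Fin n) (Fin n) ℝ)).PosSemidef)
    (hQub : (ℓ₁ • (1 : Matrix (Fin n) (Fin n) ℝ) - Q).PosSemidef)
    (hRlb : (R - ℓ₀ • (1 : Matrix (Fin m) (Fin m) ℝ)).PosSemidef)
    (hRub : (ℓ₁ • (1 : Matrix (Fin m) (Fin m) ℝ) - R).PosSemidef)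
    (hB : spNorm B ≤ ψ) (hC : spNorm C ≤ φ)
    (γ : ℝ) (hγ : γ ∈ Set.Ioc (0 : ℝ) 1) (ν : ℝ) (hν : 0 < ν)
    (K : Matrix (Fin m) (Fin p) ℝ)
    (hK : inS A B C γ K) (hKν : Jcost A B C Q R γ K ≤ ν)
    (d : ℝ) (hd : 0 < d) (x₀ : Fin n → ℝ) (hx₀ : vecNorm x₀ ≤ d) :
    ∀ τ : ℕ,
      (∑' s : ℕ,
          ((Real.sqrt γ • Acl A B C K) ^ (τ + s) *ᵥ x₀) ⬝ᵥ
            ((Q + Cᵀ * Kᵀ * R * K * C) *ᵥ ((Real.sqrt γ • Acl A B C K) ^ (τ + s) *ᵥ x₀))) =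
        ((Real.sqrt γ • Acl A B C K) ^ τ *ᵥ x₀) ⬝ᵥ
          (Pmat A B C Q R γ K *ᵥ ((Real.sqrt γ • Acl A B C K) ^ τ *ᵥ x₀)) ∧
      ((Real.sqrt γ • Acl A B C K) ^ τ *ᵥ x₀) ⬝ᵥ
          (Pmat A B C Q R γ K *ᵥ ((Real.sqrt γ • Acl A B C K) ^ τ *ᵥ x₀)) ≤
        (1 - ℓ₀ / ν) ^ τ * (ν ^ 2 * d ^ 2 / ℓ₀) :=
  stmt10_general hn A B C Q R ℓ₀ hℓ₀ hQlb hRlb γ hγ ν hν K hK hKν d x₀ hx₀
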